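/- Let p ∈ (0,1), h > 0, r ≥ 0, and r_HH, r_LL ∈ ℝ, and set c := p(1−p)·r. Define k_FB := ⌊√(c/(2h))⌋ and k_OB := ⌊(−h + √(h² + 4hc))/(2h)⌋ (both in ℕ), and define W_FB := p·r_HH + (1−p)·r_LL − c/(2k_FB+1) − (2·k_FB·(k_FB+1)/(2k_FB+1))·h, W_OB := p·r_HH + (1−p)·r_LL − c/(k_OB+1) − k_OB·h, and W_NB := p·r_HH + (1−p)·r_LL − c. Then W_FB − W_OB ≤ W_OB − W_NB; that is, patience has diminishing marginal returns: the welfare gain from making the second side patient is at most the gain from making the first side patient. -/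

import Mathlib

/-!
With `c = p(1-p)r`, the three welfares are `p rHH + (1-p) rLL` minus the costs `c`,
`F(kOB)` and `G(kFB)`, where `F(k) = c/(k+1) + k h` and
`G(k) = c/(2k+1) + 2k(k+1)h/(2k+1)`. `kOB` is the floor of the nonnegative root of
`h x(x+1) = c`, so `h kOB(kOB+1) ≤ c ≤ h (kOB+1)(kOB+2)`, which makes `kOB` a minimiser of `F`
over `ℕ`.
The claim is `2 F(kOB) ≤ G(kFB) + c`, and it already holds with `kFB` in place of `kOB` because
`G(k) + c - 2 F(k) = 2k²(c - h(k+1)) / ((k+1)(2k+1))`, which is nonnegative once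
`2hk² ≤ c`, as the floor defining `kFB` guarantees.
-/

noncomputable section

def oneSidedBacklogCost (c h : ℝ) (k : ℕ) : ℝ := c / (k + 1) + k * h

def fullBacklogCost (c h : ℝ) (k : ℕ) : ℝ :=
  c / (2 * k + 1) + 2 * k * (k + 1) / (2 * k + 1) * h

def quadraticRoot (h c : ℝ) : ℝ := (-h + √(h ^ 2 + 4 * h * c)) / (2 * h)

end

lemma quadraticRoot_nonneg {h c : ℝ} (hh : 0 < h) (hc : 0 ≤ c) : 0 ≤ quadraticRoot h c := by
  have : h ≤ √(h ^ 2 + 4 * h * c) :=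
    Real.le_sqrt_of_sq_le (by nlinarith)
  exact div_nonneg (by linarith) (by positivity)

lemma mul_quadraticRoot_mul_succ {h c : ℝ} (hh : 0 < h) (hc : 0 ≤ c) :
    h * quadraticRoot h c * (quadraticRoot h c + 1) = c := by
  have hs : √(h ^ 2 + 4 * h * c) ^ 2 = h ^ 2 + 4 * h * c := Real.sq_sqrt (by positivity)
  unfold quadraticRoot
  generalize √(h ^ 2 + 4 * h * c) = s at hs
  field_simp
  linear_combination hs

lemma floor_bounds_of_mul_mul_succ_eq {h c x : ℝ} (hh : 0 ≤ h) (hx : 0 ≤ x)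
    (hxc : h * x * (x + 1) = c) :
    h * ⌊x⌋₊ * (⌊x⌋₊ + 1) ≤ c ∧ c ≤ h * (⌊x⌋₊ + 1) * (⌊x⌋₊ + 2) := by
  have hlo : (⌊x⌋₊ : ℝ) ≤ x := Nat.floor_le hx
  have hhi : x < ⌊x⌋₊ + 1 := Nat.lt_floor_add_one x
  have hm : (0 : ℝ) ≤ ⌊x⌋₊ := Nat.cast_nonneg _
  constructor <;>
    nlinarith [mul_nonneg hh (sub_nonneg.2 hlo), mul_nonneg hh (sub_nonneg.2 hhi.le)]

lemma oneSidedBacklogCost_le_of_bounds {c h : ℝ} {m : ℕ}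
    (hlo : h * m * (m + 1) ≤ c) (hhi : c ≤ h * (m + 1) * (m + 2)) (a : ℕ) :
    oneSidedBacklogCost c h m ≤ oneSidedBacklogCost c h a := by
  have hdiff : oneSidedBacklogCost c h a - oneSidedBacklogCost c h m
      = ((a : ℝ) - m) * (h * (m + 1) * (a + 1) - c) / ((m + 1) * (a + 1)) := by
    unfold oneSidedBacklogCost
    field_simp
    ring
  have hnum : 0 ≤ ((a : ℝ) - m) * (h * (m + 1) * (a + 1) - c) := by
    rcases lt_trichotomy a m with ham | rfl | hma
    · have ham : (a : ℝ) + 1 ≤ m := by exact_mod_cast ham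
      exact mul_nonneg_of_nonpos_of_nonpos (by linarith) (by nlinarith)
    · simp
    · have hma : (m : ℝ) + 2 ≤ a + 1 := by exact_mod_cast Nat.succ_le_succ hma
      exact mul_nonneg (by linarith) (by nlinarith)
  have : 0 ≤ oneSidedBacklogCost c h a - oneSidedBacklogCost c h m := by
    rw [hdiff]; positivity
  linarith

lemma two_mul_sq_le_of_floor_sqrt {c h : ℝ} (hh : 0 < h) (hc : 0 ≤ c) :
    2 * h * (⌊√(c / (2 * h))⌋₊ : ℝ) ^ 2 ≤ c := by
  have hk : (⌊√(c / (2 * h))⌋₊ : ℝ) ^ 2 ≤ c / (2 * h) :=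
    (Real.le_sqrt (Nat.cast_nonneg _) (by positivity)).1 (Nat.floor_le (Real.sqrt_nonneg _))
  rw [le_div_iff₀ (by positivity)] at hk
  linarith

lemma fullBacklogCost_add_sub_two_mul_oneSidedBacklogCost (c h : ℝ) (k : ℕ) :
    fullBacklogCost c h k + c - 2 * oneSidedBacklogCost c h k
      = 2 * k ^ 2 / ((k + 1) * (2 * k + 1)) * (c - h * (k + 1)) := by
  unfold fullBacklogCost oneSidedBacklogCost
  field_simp
  ring

lemma two_mul_oneSidedBacklogCost_le {c h : ℝ} (hh : 0 ≤ h) {k : ℕ} (hk : 2 * h * k ^ 2 ≤ c) :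
    2 * oneSidedBacklogCost c h k ≤ fullBacklogCost c h k + c := by
  have hsign : 0 ≤ 2 * (k : ℝ) ^ 2 / ((k + 1) * (2 * k + 1)) * (c - h * (k + 1)) := by
    rcases Nat.eq_zero_or_pos k with rfl | hk1
    · simp
    · have hk1 : (1 : ℝ) ≤ k := by exact_mod_cast hk1
      have h2k : (0 : ℝ) ≤ 2 * k + 1 := by positivity
      exact mul_nonneg (by positivity)
        (by nlinarith [mul_nonneg hh (mul_nonneg (sub_nonneg.2 hk1) h2k)])
  linarith [fullBacklogCost_add_sub_two_mul_oneSidedBacklogCost c h k]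

/-- Diminishing marginal returns to patience in the centralized setting with
symmetric arrivals `p = q`: the welfare gain from making the second side
patient is at most the gain from making the first side patient, i.e.,
`W_FB − W_OB ≤ W_OB − W_NB`. -/
theorem centralized_diminishing_returns_to_patience
    (p h r rHH rLL c : ℝ) (hp : p ∈ Set.Ioo (0 : ℝ) 1) (hh : 0 < h)
    (hr : 0 ≤ r) (hc : c = p * (1 - p) * r)
    (kFB kOB : ℕ)
    (hkFB : kFB = ⌊Real.sqrt (c / (2 * h))⌋₊)
    (hkOB : kOB = ⌊(-h + Real.sqrt (h ^ 2 + 4 * h * c)) / (2 * h)⌋₊)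
    (WFB WOB WNB : ℝ)
    (hWFB : WFB = p * rHH + (1 - p) * rLL - c / (2 * (kFB : ℝ) + 1)
      - (2 * (kFB : ℝ) * ((kFB : ℝ) + 1) / (2 * (kFB : ℝ) + 1)) * h)
    (hWOB : WOB = p * rHH + (1 - p) * rLL - c / ((kOB : ℝ) + 1) - (kOB : ℝ) * h)
    (hWNB : WNB = p * rHH + (1 - p) * rLL - c) :
    WFB - WOB ≤ WOB - WNB := by
  have hc0 : 0 ≤ c := hc ▸ mul_nonneg (mul_nonneg hp.1.le (sub_nonneg.2 hp.2.le)) hr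
  obtain ⟨hlo, hhi⟩ := floor_bounds_of_mul_mul_succ_eq hh.le (quadraticRoot_nonneg hh hc0)
    (mul_quadraticRoot_mul_succ hh hc0)
  have hOB_opt : oneSidedBacklogCost c h kOB ≤ oneSidedBacklogCost c h kFB := by
    subst hkOB
    exact oneSidedBacklogCost_le_of_bounds hlo hhi kFB
  have hFB : 2 * oneSidedBacklogCost c h kFB ≤ fullBacklogCost c h kFB + c :=
    two_mul_oneSidedBacklogCost_le hh.le (hkFB ▸ two_mul_sq_le_of_floor_sqrt hh hc0)
  rw [hWFB, hWOB, hWNB]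
  unfold oneSidedBacklogCost fullBacklogCost at *
  linarith
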